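/- For the discrete logistic map u_{n+1} = u_n + h r u_n (1 - u_n/K) with r, K, h > 0 and h r ≤ 1: if 0 < u_0 < K then 0 < u_n < K for all n, and the sequence (u_n) is strictly increasing and converges to K. -/

import Mathlib

open Filter Function Set Topology

/-! The interval `(0, K)` is invariant under the Euler step because
`K - f x = (K - x)(K - c x) / K` with `c = h r ≤ 1`, and on it the step strictly increases `x`.
So the orbit is increasing and bounded by `K`; its limit is a positive fixed point of the step,
and the only one is `K`. -/

/-- The explicit Euler step of the logistic equation, with `c = h r`. -/
noncomputable def eulerLogistic (c K x : ℝ) : ℝ := x + c * x * (1 - x / K)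

theorem continuous_eulerLogistic (c K : ℝ) : Continuous (eulerLogistic c K) := by
  unfold eulerLogistic
  fun_prop

theorem sub_eulerLogistic {K : ℝ} (hK : K ≠ 0) (c x : ℝ) :
    K - eulerLogistic c K x = (K - x) * (K - c * x) / K := by
  unfold eulerLogistic
  field_simp
  ring

theorem mapsTo_eulerLogistic_Ioo {c : ℝ} (hc₀ : 0 ≤ c) (hc₁ : c ≤ 1) (K : ℝ) :
    MapsTo (eulerLogistic c K) (Ioo 0 K) (Ioo 0 K) := by
  rintro x ⟨hx₀, hxK⟩
  have hK : 0 < K := hx₀.trans hxK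
  have hgap : 0 < 1 - x / K := sub_pos.2 ((div_lt_one hK).2 hxK)
  refine ⟨add_pos_of_pos_of_nonneg hx₀ (mul_nonneg (mul_nonneg hc₀ hx₀.le) hgap.le), sub_pos.1 ?_⟩
  rw [sub_eulerLogistic hK.ne']
  have hcx : c * x < K := (mul_le_of_le_one_left hx₀.le hc₁).trans_lt hxK
  exact div_pos (mul_pos (sub_pos.2 hxK) (sub_pos.2 hcx)) hK

theorem lt_eulerLogistic {c K x : ℝ} (hc : 0 < c) (hx : x ∈ Ioo 0 K) :
    x < eulerLogistic c K x := by
  have hgap : 0 < 1 - x / K := sub_pos.2 ((div_lt_one (hx.1.trans hx.2)).2 hx.2)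
  have : 0 < c * x * (1 - x / K) := mul_pos (mul_pos hc hx.1) hgap
  unfold eulerLogistic
  linarith

theorem eq_of_isFixedPt_eulerLogistic {c K x : ℝ} (hc : c ≠ 0) (hx : x ≠ 0)
    (hfix : IsFixedPt (eulerLogistic c K) x) : x = K := by
  have hprod : c * x * (1 - x / K) = 0 := by
    unfold IsFixedPt eulerLogistic at hfix
    linarith
  have hratio : x / K = 1 := by
    linarith [(mul_eq_zero.1 hprod).resolve_left (mul_ne_zero hc hx)]
  have hK : K ≠ 0 := by
    rintro rfl
    simp at hratio
  exact (div_eq_one_iff_eq hK).1 hratio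

theorem isFixedPt_of_tendsto_of_succ {X : Type*} [TopologicalSpace X] [T2Space X] {f : X → X}
    {u : ℕ → X} {L : X} (hrec : ∀ n, u (n + 1) = f (u n)) (hf : ContinuousAt f L)
    (hu : Tendsto u atTop (𝓝 L)) : IsFixedPt f L := by
  have hshift : Tendsto (fun n ↦ u (n + 1)) atTop (𝓝 (f L)) := by
    simp_rw [hrec]
    exact hf.tendsto.comp hu
  exact tendsto_nhds_unique hshift (hu.comp (tendsto_add_atTop_nat 1))

theorem discrete_logistic_monotone_convergence_general (r K h : ℝ)
    (hr : 0 < r) (hh : 0 < h) (hhr : h * r ≤ 1)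
    (u : ℕ → ℝ) (hrec : ∀ n, u (n + 1) = u n + h * r * u n * (1 - u n / K))
    (h0 : 0 < u 0) (h0K : u 0 < K) :
    (∀ n, 0 < u n ∧ u n < K) ∧ StrictMono u ∧ Tendsto u atTop (nhds K) := by
  have hc : 0 < h * r := mul_pos hh hr
  have hstep : ∀ n, u (n + 1) = eulerLogistic (h * r) K (u n) := hrec
  have hbounds : ∀ n, u n ∈ Ioo 0 K := by
    intro n
    induction n with
    | zero => exact ⟨h0, h0K⟩
    | succ n ih => exact hstep n ▸ mapsTo_eulerLogistic_Ioo hc.le hhr K ih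
  have hmono : StrictMono u :=
    strictMono_nat_of_lt_succ fun n ↦ hstep n ▸ lt_eulerLogistic hc (hbounds n)
  have hbdd : BddAbove (range u) := ⟨K, forall_mem_range.2 fun n ↦ (hbounds n).2.le⟩
  set L := ⨆ n, u n
  have hL : Tendsto u atTop (𝓝 L) := tendsto_atTop_ciSup hmono.monotone hbdd
  have hLpos : 0 < L := h0.trans_le (hmono.monotone.ge_of_tendsto hL 0)
  have hLK : L = K := eq_of_isFixedPt_eulerLogistic hc.ne' hLpos.ne'
    (isFixedPt_of_tendsto_of_succ hstep (continuous_eulerLogistic _ _).continuousAt hL)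
  exact ⟨hbounds, hmono, hLK ▸ hL⟩

/-- For the Euler-discretized logistic map `u_{n+1} = u_n + h r u_n (1 - u_n/K)`
with `r, K, h > 0` and `h r ≤ 1`: if `0 < u 0 < K` then `0 < u n < K` for all `n`,
and `(u n)` is strictly increasing and converges to `K`. -/
theorem discrete_logistic_monotone_convergence (r K h : ℝ)
    (hr : 0 < r) (hK : 0 < K) (hh : 0 < h) (hhr : h * r ≤ 1)
    (u : ℕ → ℝ) (hrec : ∀ n, u (n + 1) = u n + h * r * u n * (1 - u n / K))
    (h0 : 0 < u 0) (h0K : u 0 < K) :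
    (∀ n, 0 < u n ∧ u n < K) ∧ StrictMono u ∧ Tendsto u atTop (nhds K) :=
  discrete_logistic_monotone_convergence_general r K h hr hh hhr u hrec h0 h0K
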